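/- arXiv:2502.05672 — 5 statements merged into one kernel-verified Lean document; each statement's English description precedes it below -/
import Mathlib

section
/- Let γ ∈ (0,1) and f_γ(x) = x/(x+γ). For every x ∈ (0,1], the sequence of iterates f_γ^{∘n}(x) converges to 1 - γ as n → ∞. -/
/-! Taking reciprocals conjugates `y ↦ y / (y + γ)` on `(0, ∞)` to the affine map `u ↦ γ u + 1`,
since `(y + γ) / y = γ / y + 1`. For `0 < γ < 1` this affine map is a contraction with fixed point
`1 / (1 - γ)`, so the reciprocals of the iterates tend to `1 / (1 - γ)`. -/

open Filter Topology

theorem iterate_affine_apply {c : ℝ} (hc : c ≠ 1) (b u : ℝ) (n : ℕ) :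
    (fun v => c * v + b)^[n] u = c ^ n * (u - b / (1 - c)) + b / (1 - c) := by
  have hc' : 1 - c ≠ 0 := sub_ne_zero.2 hc.symm
  induction n with
  | zero => simp
  | succ n ih =>
    rw [Function.iterate_succ_apply', ih, pow_succ]
    field_simp
    ring

theorem tendsto_iterate_affine {c : ℝ} (hc : |c| < 1) (b u : ℝ) :
    Tendsto (fun n => (fun v => c * v + b)^[n] u) atTop (𝓝 (b / (1 - c))) := by
  have hc1 : c ≠ 1 := fun h => by simp [h] at hc
  simp_rw [iterate_affine_apply hc1]
  simpa using ((tendsto_pow_atTop_nhds_zero_of_abs_lt_one hc).mul_const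
    (u - b / (1 - c))).add_const (b / (1 - c))

theorem inv_div_add_self {y : ℝ} (hy : y ≠ 0) (γ : ℝ) : (y / (y + γ))⁻¹ = γ * y⁻¹ + 1 := by
  rw [inv_div, add_div, div_self hy, div_eq_mul_inv, add_comm]

theorem iterate_div_add_pos {γ : ℝ} (hγ : 0 < γ) {x : ℝ} (hx : 0 < x) (n : ℕ) :
    0 < (fun y => y / (y + γ))^[n] x :=
  have hmaps : Set.MapsTo (fun y => y / (y + γ)) (Set.Ioi 0) (Set.Ioi 0) :=
    fun _ hy => div_pos hy (add_pos hy hγ)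
  hmaps.iterate n hx

theorem inv_iterate_div_add {γ : ℝ} (hγ : 0 < γ) {x : ℝ} (hx : 0 < x) (n : ℕ) :
    ((fun y => y / (y + γ))^[n] x)⁻¹ = (fun u => γ * u + 1)^[n] x⁻¹ := by
  induction n with
  | zero => rfl
  | succ n ih =>
    rw [Function.iterate_succ_apply', Function.iterate_succ_apply', ← ih,
      inv_div_add_self (iterate_div_add_pos hγ hx n).ne']

theorem f_gamma_iterates_tendsto (γ : ℝ) (hγ0 : 0 < γ) (hγ1 : γ < 1)
    (x : ℝ) (hx : x ∈ Set.Ioc (0:ℝ) 1) :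
    Filter.Tendsto (fun n : ℕ => (fun y : ℝ => y / (y + γ))^[n] x)
      Filter.atTop (nhds (1 - γ)) := by
  have hγ : |γ| < 1 := abs_lt.2 ⟨by linarith, hγ1⟩
  have hlim : (1 / (1 - γ))⁻¹ = 1 - γ := by rw [one_div, inv_inv]
  have hinv := (tendsto_iterate_affine hγ 1 x⁻¹).inv₀ (one_div_ne_zero (sub_ne_zero.2 hγ1.ne'))
  simp_rw [← inv_iterate_div_add hγ0 hx.1, inv_inv, hlim] at hinv
  exact hinv
end

section
/- Let N ≥ 1, b_0 = (1/(2N))((2N-1)/(2N))^{2N-1}, b ∈ (0, b_0). The map g_l : [0, (2N-1)/(2N)] → [0, (2N-1)/(2N)] defined by g_l(x) = (b/(1-x))^{1/(2N-1)} is a well-defined strict contraction on [0,(2N-1)/(2N)], and its unique fixed point is x_l(b), the smaller positive fixed point of h_b(x) = x^{2N}/(x^{2N}+b). -/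
/-!
With `n = 2N - 1` and `c = n / (n + 1)`, the threshold is `b₀ = cⁿ (1 - c)`, the maximum of
`xⁿ (1 - x)` on `[0, 1]`. The map `g x = (b / (1 - x))^(1/n)` is increasing with derivative
`g x / (n (1 - x))`, so on `[0, c]` everything is controlled by `g c`, and `b < b₀` says exactly
that `g c < c`. This gives `g [0, c] ⊆ [0, c]` and the Lipschitz bound
`g c / (n (1 - c)) < c / (n (1 - c)) = 1`. The fixed points of `g` in `[0, 1)` are the solutions
of `xⁿ (1 - x) = b`, and a contraction has at most one.
-/

open Set

section RpowDivOneSub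

variable {b p c x y : ℝ}

theorem hasDerivAt_rpow_div_one_sub (hb : 0 < b) (hx : x < 1) :
    HasDerivAt (fun x => (b / (1 - x)) ^ p) (p * (b / (1 - x)) ^ p / (1 - x)) x := by
  have h1 : 0 < 1 - x := sub_pos.2 hx
  have hquot : HasDerivAt (fun y => b / (1 - y)) (b / (1 - x) ^ 2) x :=
    ((hasDerivAt_const x b).div ((hasDerivAt_id x).const_sub 1) h1.ne').congr_deriv (by simp)
  refine ((Real.hasDerivAt_rpow_const (Or.inl (div_pos hb h1).ne')).comp x hquot).congr_deriv ?_
  rw [Real.rpow_sub_one (div_pos hb h1).ne']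
  field_simp

theorem rpow_div_one_sub_le_rpow_div_one_sub (hb : 0 ≤ b) (hp : 0 ≤ p) (hxy : x ≤ y)
    (hy : y < 1) : (b / (1 - x)) ^ p ≤ (b / (1 - y)) ^ p := by
  have h1 : 0 < 1 - y := sub_pos.2 hy
  exact Real.rpow_le_rpow (div_nonneg hb (by linarith)) (by gcongr) hp

theorem abs_rpow_div_one_sub_sub_le (hb : 0 < b) (hp : 0 ≤ p) (hc : c < 1) (hx : x ≤ c)
    (hy : y ≤ c) :
    |(b / (1 - x)) ^ p - (b / (1 - y)) ^ p| ≤ p * (b / (1 - c)) ^ p / (1 - c) * |x - y| := by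
  have hderiv : ∀ z ∈ Iic c, HasDerivWithinAt (fun x => (b / (1 - x)) ^ p)
      (p * (b / (1 - z)) ^ p / (1 - z)) (Iic c) z :=
    fun z hz => (hasDerivAt_rpow_div_one_sub hb (lt_of_le_of_lt hz hc)).hasDerivWithinAt
  have hbound : ∀ z ∈ Iic c,
      ‖p * (b / (1 - z)) ^ p / (1 - z)‖ ≤ p * (b / (1 - c)) ^ p / (1 - c) := by
    intro z (hz : z ≤ c)
    have h1 : 0 < 1 - c := sub_pos.2 hc
    have hgz : 0 ≤ (b / (1 - z)) ^ p := Real.rpow_nonneg (div_nonneg hb.le (by linarith)) p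
    rw [Real.norm_of_nonneg (div_nonneg (mul_nonneg hp hgz) (by linarith))]
    have := rpow_div_one_sub_le_rpow_div_one_sub hb.le hp hz hc
    gcongr
  simpa [Real.norm_eq_abs] using
    (convex_Iic c).norm_image_sub_le_of_norm_hasDerivWithin_le hderiv hbound hy hx

end RpowDivOneSub

section PowMulOneSub

variable {n : ℕ} {b c x : ℝ}

theorem rpow_div_one_sub_eq_of_pow_mul_one_sub_eq (hn : n ≠ 0) (hx0 : 0 ≤ x) (hx1 : x < 1)
    (h : x ^ n * (1 - x) = b) : (b / (1 - x)) ^ (1 / (n : ℝ)) = x := by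
  rw [← h, mul_div_cancel_right₀ _ (sub_pos.2 hx1).ne', one_div, Real.pow_rpow_inv_natCast hx0 hn]

theorem rpow_div_one_sub_lt_of_lt_pow_mul_one_sub (hn : n ≠ 0) (hb : 0 ≤ b) (hc0 : 0 ≤ c)
    (hc1 : c < 1) (h : b < c ^ n * (1 - c)) : (b / (1 - c)) ^ (1 / (n : ℝ)) < c := by
  have h1 : 0 < 1 - c := sub_pos.2 hc1
  calc (b / (1 - c)) ^ (1 / (n : ℝ)) < (c ^ n) ^ (1 / (n : ℝ)) := by
        gcongr
        exact (div_lt_iff₀ h1).2 h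
    _ = c := by rw [one_div, Real.pow_rpow_inv_natCast hc0 hn]

theorem mapsTo_rpow_div_one_sub (hn : n ≠ 0) (hb : 0 ≤ b) (hc1 : c < 1)
    (h : b < c ^ n * (1 - c)) :
    MapsTo (fun x : ℝ => (b / (1 - x)) ^ (1 / (n : ℝ))) (Icc 0 c) (Icc 0 c) := by
  intro x ⟨hx0, hxc⟩
  have hc0 : 0 ≤ c := hx0.trans hxc
  refine ⟨Real.rpow_nonneg (div_nonneg hb (by linarith)) _, ?_⟩
  exact (rpow_div_one_sub_le_rpow_div_one_sub hb (by positivity) hxc hc1).trans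
    (rpow_div_one_sub_lt_of_lt_pow_mul_one_sub hn hb hc0 hc1 h).le

theorem one_div_mul_rpow_div_one_sub_div_lt_one (hn : n ≠ 0) (hb : 0 ≤ b)
    (h : b < ((n : ℝ) / (n + 1)) ^ n * (1 - n / (n + 1))) :
    1 / (n : ℝ) * (b / (1 - n / (n + 1))) ^ (1 / (n : ℝ)) / (1 - n / (n + 1)) < 1 := by
  have hn0 : (0 : ℝ) < n := by positivity
  have hc1 : (n : ℝ) / (n + 1) < 1 := (div_lt_one (by positivity)).2 (by linarith)
  have hgc := rpow_div_one_sub_lt_of_lt_pow_mul_one_sub hn hb (by positivity) hc1 h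
  have h1c : 1 - (n : ℝ) / (n + 1) = 1 / (n + 1) := by field_simp; ring
  calc 1 / (n : ℝ) * (b / (1 - n / (n + 1))) ^ (1 / (n : ℝ)) / (1 - n / (n + 1))
      < 1 / (n : ℝ) * (n / (n + 1)) / (1 - n / (n + 1)) := by gcongr
    _ = 1 := by rw [h1c]; field_simp

end PowMulOneSub

theorem g_l_contraction (N : ℕ) (hN : 1 ≤ N) (b : ℝ) (hb0 : 0 < b)
    (hb1 : b < (1 / (2 * N)) * ((2 * (N:ℝ) - 1) / (2 * N)) ^ (2 * N - 1))
    (xl : ℝ) (hxl : xl ∈ Set.Ioo (0:ℝ) ((2 * (N:ℝ) - 1) / (2 * N)))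
    (hxl_eq : xl ^ (2 * N - 1) * (1 - xl) = b) :
    Set.MapsTo (fun x : ℝ => (b / (1 - x)) ^ (1 / (2 * (N:ℝ) - 1)))
      (Set.Icc 0 ((2 * (N:ℝ) - 1) / (2 * N)))
      (Set.Icc 0 ((2 * (N:ℝ) - 1) / (2 * N))) ∧
    (∃ L : ℝ, 0 ≤ L ∧ L < 1 ∧
      ∀ x ∈ Set.Icc (0:ℝ) ((2 * (N:ℝ) - 1) / (2 * N)),
        ∀ y ∈ Set.Icc (0:ℝ) ((2 * (N:ℝ) - 1) / (2 * N)),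
          |(b / (1 - x)) ^ (1 / (2 * (N:ℝ) - 1)) -
            (b / (1 - y)) ^ (1 / (2 * (N:ℝ) - 1))| ≤ L * |x - y|) ∧
    (b / (1 - xl)) ^ (1 / (2 * (N:ℝ) - 1)) = xl ∧
    (∀ x ∈ Set.Icc (0:ℝ) ((2 * (N:ℝ) - 1) / (2 * N)),
      (b / (1 - x)) ^ (1 / (2 * (N:ℝ) - 1)) = x → x = xl) := by
  set n := 2 * N - 1 with hn_def
  have hn : n ≠ 0 := by omega
  have hn_cast : 2 * (N : ℝ) - 1 = n := by rw [hn_def, Nat.cast_sub (by omega)]; push_cast; ring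
  have h2N : 2 * (N : ℝ) = n + 1 := by linarith
  have hb1' : b < ((n : ℝ) / (n + 1)) ^ n * (1 - n / (n + 1)) := by
    rw [hn_cast, h2N] at hb1
    convert hb1 using 1
    field_simp
    ring
  rw [hn_cast, h2N] at hxl ⊢
  set c := (n : ℝ) / (n + 1)
  have hc1 : c < 1 := (div_lt_one (by positivity)).2 (by linarith)
  have hfix := rpow_div_one_sub_eq_of_pow_mul_one_sub_eq hn hxl.1.le (hxl.2.trans hc1) hxl_eq
  have hlip (x : ℝ) (hx : x ∈ Icc 0 c) (y : ℝ) (hy : y ∈ Icc 0 c) :=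
    abs_rpow_div_one_sub_sub_le hb0 (p := 1 / (n : ℝ)) (by positivity) hc1 hx.2 hy.2
  have hK1 := one_div_mul_rpow_div_one_sub_div_lt_one hn hb0.le hb1'
  refine ⟨mapsTo_rpow_div_one_sub hn hb0.le hc1 hb1', ⟨_, ?_, hK1, hlip⟩, hfix, fun x hx hfx => ?_⟩
  · have := sub_pos.2 hc1
    positivity
  · have := hlip x hx xl ⟨hxl.1.le, hxl.2.le⟩
    rw [hfx, hfix] at this
    exact sub_eq_zero.1 (abs_eq_zero.1 (by nlinarith [abs_nonneg (x - xl)]))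
end

section
/- Let N ≥ 1, b_0 = (1/(2N))((2N-1)/(2N))^{2N-1}, b ∈ (0, b_0). The map g_u : [(2N-1)/(2N), 1] → [(2N-1)/(2N), 1] defined by g_u(x) = 1 - b/x^{2N-1} is a well-defined strict contraction, and its unique fixed point is x_u(b), the larger positive fixed point of h_b(x) = x^{2N}/(x^{2N}+b). -/
/-!
Write `c = (2N-1)/(2N)`, so that `b₀ = (1 - c) c^(2N-1)` and `(1 - c)(2N-1) = c`.
On `[c, 1]` the derivative of `g_u` is `(2N-1) b / x^(2N) ≤ (2N-1) b / c^(2N)`, and this is `< 1`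
precisely because `b < b₀`; the same bound `b / c^(2N-1) < 1 - c` keeps `g_u` above `c`.
The fixed-point equation `1 - b / x^(2N-1) = x` is `x^(2N-1) (1 - x) = b`, so `x_u` is a fixed
point, and it is the only one since `g_u` is a contraction.
-/

open Set

lemma hasDerivAt_div_pow (n : ℕ) (b : ℝ) {z : ℝ} (hz : z ≠ 0) :
    HasDerivAt (fun z : ℝ => b / z ^ n) (-(b * n / z ^ (n + 1))) z := by
  have hf : (fun z : ℝ => b / z ^ n) = fun z => b * z ^ (-(n : ℤ)) := by
    ext z; rw [zpow_neg, zpow_natCast, div_eq_mul_inv]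
  rw [hf]
  refine ((hasDerivAt_zpow (-(n : ℤ)) z (Or.inl hz)).const_mul b).congr_deriv ?_
  rw [show -(n : ℤ) - 1 = -((n + 1 : ℕ) : ℤ) by push_cast; ring, zpow_neg, zpow_natCast]
  push_cast; ring

lemma abs_div_pow_sub_div_pow_le {n : ℕ} {b c x y : ℝ} (hb : 0 ≤ b) (hc : 0 < c)
    (hx : c ≤ x) (hy : c ≤ y) :
    |b / x ^ n - b / y ^ n| ≤ b * n / c ^ (n + 1) * |x - y| := by
  have hderiv : ∀ z ∈ Ici c,
      HasDerivWithinAt (fun z : ℝ => b / z ^ n) (-(b * n / z ^ (n + 1))) (Ici c) z :=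
    fun z hz => (hasDerivAt_div_pow n b (hc.trans_le hz).ne').hasDerivWithinAt
  have hbound : ∀ z ∈ Ici c, ‖-(b * n / z ^ (n + 1))‖ ≤ b * n / c ^ (n + 1) := by
    intro z hz
    rw [norm_neg, Real.norm_of_nonneg (by have := hc.trans_le hz; positivity)]
    gcongr
    exact hz
  simpa only [Real.norm_eq_abs] using
    (convex_Ici c).norm_image_sub_le_of_norm_hasDerivWithin_le hderiv hbound hy hx

lemma one_sub_div_pow_mem_Icc {n : ℕ} {b c x : ℝ} (hb : 0 ≤ b) (hc : 0 < c)
    (hbc : b < (1 - c) * c ^ n) (hx : x ∈ Icc c 1) : 1 - b / x ^ n ∈ Icc c 1 := by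
  have hcn : 0 < c ^ n := pow_pos hc n
  have hle : b / x ^ n ≤ b / c ^ n := by gcongr; exact hx.1
  have hlt : b / c ^ n < 1 - c := (div_lt_iff₀ hcn).2 hbc
  have hnn : 0 ≤ b / x ^ n := by have := hc.trans_le hx.1; positivity
  constructor <;> linarith

lemma mul_div_pow_succ_lt_one {n : ℕ} {b c : ℝ} (hc : 0 < c) (hbc : b < (1 - c) * c ^ n)
    (hn : (1 - c) * n = c) : b * n / c ^ (n + 1) < 1 := by
  have hn0 : (0 : ℝ) < n := by
    rcases (Nat.cast_nonneg n : (0 : ℝ) ≤ n).lt_or_eq with h | h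
    · exact h
    · rw [← h, mul_zero] at hn; linarith
  rw [div_lt_one (pow_pos hc _)]
  calc b * n < (1 - c) * c ^ n * n := by gcongr
    _ = c ^ n * ((1 - c) * n) := by ring
    _ = c ^ (n + 1) := by rw [hn, pow_succ]

theorem g_u_contraction (N : ℕ) (hN : 1 ≤ N) (b : ℝ) (hb0 : 0 < b)
    (hb1 : b < (1 / (2 * N)) * ((2 * (N:ℝ) - 1) / (2 * N)) ^ (2 * N - 1))
    (xu : ℝ) (hxu : xu ∈ Set.Ioo ((2 * (N:ℝ) - 1) / (2 * N)) 1)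
    (hxu_eq : xu ^ (2 * N - 1) * (1 - xu) = b) :
    Set.MapsTo (fun x : ℝ => 1 - b / x ^ (2 * N - 1))
      (Set.Icc ((2 * (N:ℝ) - 1) / (2 * N)) 1)
      (Set.Icc ((2 * (N:ℝ) - 1) / (2 * N)) 1) ∧
    (∃ L : ℝ, 0 ≤ L ∧ L < 1 ∧
      ∀ x ∈ Set.Icc ((2 * (N:ℝ) - 1) / (2 * N)) 1,
        ∀ y ∈ Set.Icc ((2 * (N:ℝ) - 1) / (2 * N)) 1,
          |(1 - b / x ^ (2 * N - 1)) - (1 - b / y ^ (2 * N - 1))| ≤ L * |x - y|) ∧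
    1 - b / xu ^ (2 * N - 1) = xu ∧
    (∀ x ∈ Set.Icc ((2 * (N:ℝ) - 1) / (2 * N)) 1,
      1 - b / x ^ (2 * N - 1) = x → x = xu) := by
  set m := 2 * N - 1
  set c : ℝ := (2 * (N:ℝ) - 1) / (2 * N)
  have hN' : (1 : ℝ) ≤ N := by exact_mod_cast hN
  have hmc : (m : ℝ) = 2 * N - 1 := by simp only [m]; push_cast [show 1 ≤ 2 * N by omega]; ring
  have hc : 0 < c := div_pos (by linarith) (by linarith)
  have h1c : 1 - c = 1 / (2 * N) := by simp only [c]; field_simp; ring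
  have hcm : (1 - c) * m = c := by rw [h1c, hmc]; simp only [c]; field_simp
  have hb : b < (1 - c) * c ^ m := h1c ▸ hb1
  have hlip : ∀ x ∈ Icc c 1, ∀ y ∈ Icc c 1,
      |(1 - b / x ^ m) - (1 - b / y ^ m)| ≤ b * m / c ^ (m + 1) * |x - y| := by
    intro x hx y hy
    rw [sub_sub_sub_cancel_left, abs_sub_comm x]
    exact abs_div_pow_sub_div_pow_le hb0.le hc hy.1 hx.1
  have hfix : 1 - b / xu ^ m = xu := by
    rw [← hxu_eq, mul_div_cancel_left₀ _ (pow_pos (hc.trans hxu.1) m).ne']; ring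
  have hL := mul_div_pow_succ_lt_one hc hb hcm
  refine ⟨fun x hx => one_sub_div_pow_mem_Icc hb0.le hc hb hx,
    ⟨_, by positivity, hL, hlip⟩, hfix, fun x hx hfx => ?_⟩
  by_contra hne
  have hpos : 0 < |x - xu| := abs_pos.2 (sub_ne_zero.2 hne)
  have hself := hlip x hx xu (Ioo_subset_Icc_self hxu)
  rw [hfx, hfix] at hself
  nlinarith
end

section
/- Let γ, ε > 0 with γ + ε < 1, |A| ≥ M > 0 (real or integer parameters), and define z(x) = (1-ε)·x/(x+γ) + ε·M/|A| for x ∈ [0,1]. Then z has a unique fixed point x* in [0,1] given by x* = (x̂ + √(x̂² + 4γεM/|A|))/2 where x̂ = 1 - ε(1 - M/|A|) - γ; moreover x̂ ≤ x* and 0 < x* < 1, z(x) > x for x < x*, and z(x) < x for x > x*. -/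
/-! Clearing the denominator, `z x - x = -q x / (x + γ)` for the monic quadratic
`q x = x² - x̂ x - γ ε M/A = (x - x*) (x - x₋)`. Its constant term is negative, so `x₋ < 0 < x*`
and on `[0, 1]` the sign of `z x - x` is that of `x* - x`. Finally `x* < 1` because
`q 1 = γ (1 - ε) + ε (1 - M/A) (1 + γ) > 0`. -/

section QuadraticRoots

variable (b c : ℝ)

noncomputable def upperRoot : ℝ := (b + √(b ^ 2 + 4 * c)) / 2

noncomputable def lowerRoot : ℝ := (b - √(b ^ 2 + 4 * c)) / 2

lemma sq_sub_mul_sub_eq_mul {c : ℝ} (hc : 0 ≤ c) (x : ℝ) :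
    x ^ 2 - b * x - c = (x - upperRoot b c) * (x - lowerRoot b c) := by
  have hs := Real.sq_sqrt (by positivity : 0 ≤ b ^ 2 + 4 * c)
  unfold upperRoot lowerRoot
  linear_combination (1 / 4 : ℝ) * hs

lemma le_upperRoot {c : ℝ} (hc : 0 ≤ c) : b ≤ upperRoot b c := by
  have : b ≤ √(b ^ 2 + 4 * c) := Real.le_sqrt_of_sq_le (by linarith)
  unfold upperRoot
  linarith

lemma abs_lt_sqrt_sq_add {c : ℝ} (hc : 0 < c) : |b| < √(b ^ 2 + 4 * c) :=
  (Real.lt_sqrt (abs_nonneg b)).2 (by rw [sq_abs]; linarith)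

lemma upperRoot_pos {c : ℝ} (hc : 0 < c) : 0 < upperRoot b c := by
  have := abs_lt_sqrt_sq_add b hc
  unfold upperRoot
  linarith [neg_abs_le b]

lemma lowerRoot_neg {c : ℝ} (hc : 0 < c) : lowerRoot b c < 0 := by
  have := abs_lt_sqrt_sq_add b hc
  unfold lowerRoot
  linarith [le_abs_self b]

lemma upperRoot_lt_one {c : ℝ} (hc : 0 ≤ c) (hbc : b + c < 1) : upperRoot b c < 1 := by
  have : √(b ^ 2 + 4 * c) < 2 - b :=
    (Real.sqrt_lt' (by linarith)).2 (by nlinarith)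
  unfold upperRoot
  linarith

end QuadraticRoots

section FixedPointMap

variable {γ ε t x : ℝ}

lemma map_sub_self_eq (hc : 0 ≤ γ * ε * t) (hx : x + γ ≠ 0) :
    (1 - ε) * x / (x + γ) + ε * t - x =
      (upperRoot (1 - ε * (1 - t) - γ) (γ * ε * t) - x) *
        ((x - lowerRoot (1 - ε * (1 - t) - γ) (γ * ε * t)) / (x + γ)) := by
  have hq := sq_sub_mul_sub_eq_mul (1 - ε * (1 - t) - γ) hc x
  have hd : (1 - ε) * x / (x + γ) * (x + γ) = (1 - ε) * x := div_mul_cancel₀ _ hx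
  rw [mul_div_assoc', eq_div_iff hx]
  linear_combination hd - hq

lemma sub_lowerRoot_div_pos (hγ : 0 < γ) (hc : 0 < γ * ε * t) (hx : 0 ≤ x) :
    0 < (x - lowerRoot (1 - ε * (1 - t) - γ) (γ * ε * t)) / (x + γ) :=
  div_pos (by linarith [lowerRoot_neg (1 - ε * (1 - t) - γ) hc]) (by linarith)

end FixedPointMap

theorem z_fixed_point (γ ε M A : ℝ) (hγ : 0 < γ) (hε : 0 < ε)
    (hγε : γ + ε < 1) (hM : 0 < M) (hMA : M ≤ A) :
    let xhat := 1 - ε * (1 - M / A) - γ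
    let xstar := (xhat + Real.sqrt (xhat ^ 2 + 4 * γ * ε * M / A)) / 2
    xhat ≤ xstar ∧ 0 < xstar ∧ xstar < 1 ∧
    (1 - ε) * xstar / (xstar + γ) + ε * M / A = xstar ∧
    (∀ x ∈ Set.Icc (0:ℝ) 1,
      (1 - ε) * x / (x + γ) + ε * M / A = x → x = xstar) ∧
    (∀ x ∈ Set.Icc (0:ℝ) 1, x < xstar → x < (1 - ε) * x / (x + γ) + ε * M / A) ∧
    (∀ x ∈ Set.Icc (0:ℝ) 1, xstar < x → (1 - ε) * x / (x + γ) + ε * M / A < x) := by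
  intro xhat xstar
  have hA : 0 < A := hM.trans_le hMA
  have ht1 : M / A ≤ 1 := (div_le_one hA).2 hMA
  set c := γ * ε * (M / A) with hc_def
  have hc : 0 < c := by positivity
  have hbc : xhat + c < 1 := by
    nlinarith [mul_pos hγ (by linarith : 0 < 1 - ε), mul_nonneg hε.le (sub_nonneg.2 ht1)]
  have hxstar : xstar = upperRoot xhat c := by
    simp only [xstar, upperRoot, hc_def]; ring_nf
  have hz : ∀ x, 0 ≤ x → (1 - ε) * x / (x + γ) + ε * M / A - x =
      (xstar - x) * ((x - lowerRoot xhat c) / (x + γ)) := fun x hx => by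
    rw [mul_div_assoc ε M A, hxstar]; exact map_sub_self_eq hc.le (by linarith)
  have hp : ∀ x, 0 ≤ x → 0 < (x - lowerRoot xhat c) / (x + γ) :=
    fun x hx => sub_lowerRoot_div_pos hγ hc hx
  have hpos : 0 < xstar := hxstar ▸ upperRoot_pos xhat hc
  refine ⟨hxstar ▸ le_upperRoot xhat hc.le, hpos, hxstar ▸ upperRoot_lt_one xhat hc.le hbc,
    ?_, fun x hx hfix => ?_, fun x hx hlt => ?_, fun x hx hlt => ?_⟩
  · simpa only [sub_self, zero_mul, sub_eq_zero] using hz xstar hpos.le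
  · have h := hz x hx.1
    rw [hfix, sub_self, eq_comm, mul_eq_zero] at h
    exact (sub_eq_zero.1 (h.resolve_right (hp x hx.1).ne')).symm
  · linarith [hz x hx.1, mul_pos (sub_pos.2 hlt) (hp x hx.1)]
  · linarith [hz x hx.1, mul_neg_of_neg_of_pos (sub_neg.2 hlt) (hp x hx.1)]
end

section
/- Let N ≥ 1, b ∈ (0, b_0) with b_0 = (1/(2N))((2N-1)/(2N))^{2N-1}, and h_b(x) = x^{2N}/(x^{2N}+b) with larger fixed point x_u = x_u(b). Then the derivative of h_b at x_u equals 2N·b·x_u^{2N-1}/(x_u^{2N}+b)², and this value is strictly less than 1; consequently, for x_0 ∈ (x_l(b), 1] with x_0 ≠ x_u, the sequence y_n = 2(1 - h_b^{∘n}(x_0)) converges q-linearly to 2(1-x_u) with rate 2N·b·x_u^{2N-1}/(x_u^{2N}+b)². -/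
/-!
For `x > 0`, `h_b x - x = x (ψ x - b) / (x ^ (2N) + b)` with `ψ x = x ^ (2N-1) (1 - x)`, and `ψ`
increases up to `(2N-1)/(2N)` and decreases after it. Hence `h_b` moves the points of `(x_l, x_u)`
up and the points beyond `x_u` down, and being increasing it never jumps over `x_u`: the orbit is
monotone, and its limit is a fixed point, which can only be `x_u`. At `x_u` we have
`x_u ^ (2N) + b = x_u ^ (2N-1)`, so `h_b'(x_u) = 2N (1 - x_u) < 1` because `x_u` lies beyond the peak.
The ratio of successive errors is the slope of `h_b` between `x_u` and the current iterate, which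
tends to `h_b'(x_u)`.
-/

open Filter Set Topology

section IterateConvergence

variable {α : Type*} [ConditionallyCompleteLinearOrder α] [TopologicalSpace α] [OrderTopology α]
  {f : α → α} {a p : α}

theorem tendsto_iterate_of_lt_map (hap : a < p) (hfp : f p = p) (hmono : StrictMonoOn f (Icc a p))
    (hcont : ContinuousOn f (Icc a p)) (hlt : ∀ x ∈ Ico a p, x < f x) :
    Tendsto (fun n => f^[n] a) atTop (𝓝 p) ∧ ∀ n, f^[n] a < p := by
  have hmaps : MapsTo f (Ico a p) (Ico a p) := fun x hx =>
    ⟨hx.1.trans (hlt x hx).le, hfp ▸ hmono ⟨hx.1, hx.2.le⟩ ⟨hap.le, le_rfl⟩ hx.2⟩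
  have hmem : ∀ n, f^[n] a ∈ Ico a p := fun n => hmaps.iterate n ⟨le_rfl, hap⟩
  have hmon : Monotone fun n => f^[n] a := monotone_nat_of_le_succ fun n => by
    rw [Function.iterate_succ_apply']
    exact (hlt _ (hmem n)).le
  have hbdd : BddAbove (range fun n => f^[n] a) :=
    ⟨p, forall_mem_range.2 fun n => (hmem n).2.le⟩
  set L := ⨆ n, f^[n] a
  have hL : Tendsto (fun n => f^[n] a) atTop (𝓝 L) := tendsto_atTop_ciSup hmon hbdd
  have hLmem : L ∈ Icc a p := ⟨le_ciSup_of_le hbdd 0 le_rfl, ciSup_le fun n => (hmem n).2.le⟩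
  have hfL : f L = L := by
    have hL' : Tendsto (fun n => f^[n] a) atTop (𝓝[Icc a p] L) :=
      tendsto_nhdsWithin_iff.2 ⟨hL, .of_forall fun n => Ico_subset_Icc_self (hmem n)⟩
    refine tendsto_nhds_unique ((hcont L hLmem).tendsto.comp hL') ?_
    simpa only [Function.comp_def, ← Function.iterate_succ_apply'] using
      hL.comp (tendsto_add_atTop_nat 1)
  have hLp : L = p := hLmem.2.eq_or_lt.resolve_right fun h => (hlt L ⟨hLmem.1, h⟩).ne' hfL
  exact ⟨hLp ▸ hL, fun n => (hmem n).2⟩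

theorem tendsto_iterate_of_map_lt (hpa : p < a) (hfp : f p = p) (hmono : StrictMonoOn f (Icc p a))
    (hcont : ContinuousOn f (Icc p a)) (hlt : ∀ x ∈ Ioc p a, f x < x) :
    Tendsto (fun n => f^[n] a) atTop (𝓝 p) ∧ ∀ n, p < f^[n] a :=
  tendsto_iterate_of_lt_map (α := αᵒᵈ) (a := OrderDual.toDual a) (p := OrderDual.toDual p) hpa hfp
    (by rw [Icc_toDual]; exact hmono.dual) (by rw [Icc_toDual]; exact hcont)
    fun x hx => hlt x ⟨hx.2, hx.1⟩

end IterateConvergence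

theorem tendsto_norm_iterate_succ_sub_div {𝕜 : Type*} [NontriviallyNormedField 𝕜] {f : 𝕜 → 𝕜}
    {f' p x : 𝕜} (hf : HasDerivAt f f' p) (hfp : f p = p)
    (hx : Tendsto (fun n => f^[n] x) atTop (𝓝 p)) (hxp : ∀ n, f^[n] x ≠ p) :
    Tendsto (fun n => ‖f^[n + 1] x - p‖ / ‖f^[n] x - p‖) atTop (𝓝 ‖f'‖) := by
  have hx' : Tendsto (fun n => f^[n] x) atTop (𝓝[≠] p) :=
    tendsto_nhdsWithin_iff.2 ⟨hx, .of_forall hxp⟩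
  refine ((hasDerivAt_iff_tendsto_slope.1 hf).norm.comp hx').congr fun n => ?_
  rw [Function.comp_apply, slope_def_field, norm_div, hfp, Function.iterate_succ_apply']

theorem hasDerivAt_pow_mul_one_sub (m : ℕ) (x : ℝ) :
    HasDerivAt (fun y : ℝ => y ^ m * (1 - y)) (m * x ^ (m - 1) * (1 - x) - x ^ m) x :=
  ((hasDerivAt_pow m x).mul ((hasDerivAt_id' x).const_sub 1)).congr_deriv (by ring)

theorem strictMonoOn_pow_mul_one_sub (m : ℕ) :
    StrictMonoOn (fun x : ℝ => x ^ m * (1 - x)) (Icc 0 (m / (m + 1))) := by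
  refine strictMonoOn_of_deriv_pos (convex_Icc _ _) (by fun_prop) fun x hx => ?_
  rw [interior_Icc] at hx
  rw [(hasDerivAt_pow_mul_one_sub m x).deriv]
  obtain _ | m := m
  · simp at hx
  have hlt : ((m : ℝ) + 1 + 1) * x < m + 1 := by
    have hx2 := hx.2
    push_cast at hx2
    rw [lt_div_iff₀ (by positivity)] at hx2
    linarith
  have hxm : 0 < x ^ m := pow_pos hx.1 m
  push_cast
  simp only [pow_succ]
  nlinarith

theorem strictAntiOn_pow_mul_one_sub (m : ℕ) :
    StrictAntiOn (fun x : ℝ => x ^ m * (1 - x)) (Ici (m / (m + 1))) := by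
  refine strictAntiOn_of_deriv_neg (convex_Ici _) (by fun_prop) fun x hx => ?_
  rw [interior_Ici] at hx
  rw [(hasDerivAt_pow_mul_one_sub m x).deriv]
  obtain _ | m := m
  · simp
  have hgt : (m : ℝ) + 1 < ((m : ℝ) + 1 + 1) * x := by
    push_cast at hx
    rw [mem_Ioi, div_lt_iff₀ (by positivity)] at hx
    linarith
  have hx0 : 0 < x := lt_of_le_of_lt (by positivity) hx
  have hxm : 0 < x ^ m := pow_pos hx0 m
  push_cast
  simp only [pow_succ]
  nlinarith

theorem lt_pow_mul_one_sub_of_mem_Ioo {m : ℕ} {b l u x : ℝ} (hl : 0 ≤ l)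
    (hlb : l ^ m * (1 - l) = b) (hub : u ^ m * (1 - u) = b) (hx : x ∈ Ioo l u) :
    b < x ^ m * (1 - x) := by
  rcases le_or_gt x (m / (m + 1)) with hxc | hxc
  · exact hlb ▸ strictMonoOn_pow_mul_one_sub m ⟨hl, hx.1.le.trans hxc⟩ ⟨hl.trans hx.1.le, hxc⟩ hx.1
  · exact hub ▸ strictAntiOn_pow_mul_one_sub m (mem_Ici.2 hxc.le) (mem_Ici.2 (hxc.trans hx.2).le) hx.2

noncomputable def hillMap (k : ℕ) (b x : ℝ) : ℝ := x ^ k / (x ^ k + b)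

section HillMap

variable {k : ℕ} {b x : ℝ}

theorem hillMap_sub_self (hk : k ≠ 0) (hx : x ^ k + b ≠ 0) :
    hillMap k b x - x = x * (x ^ (k - 1) * (1 - x) - b) / (x ^ k + b) := by
  rw [hillMap, eq_div_iff hx, sub_mul, div_mul_cancel₀ _ hx, ← pow_sub_one_mul hk]
  ring

theorem lt_hillMap (hk : k ≠ 0) (hb : 0 < b) (hx : 0 < x) (h : b < x ^ (k - 1) * (1 - x)) :
    x < hillMap k b x := by
  rw [← sub_pos, hillMap_sub_self hk (by positivity)]
  exact div_pos (mul_pos hx (sub_pos.2 h)) (by positivity)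

theorem hillMap_lt (hk : k ≠ 0) (hb : 0 < b) (hx : 0 < x) (h : x ^ (k - 1) * (1 - x) < b) :
    hillMap k b x < x := by
  rw [← sub_neg, hillMap_sub_self hk (by positivity)]
  exact div_neg_of_neg_of_pos (mul_neg_of_pos_of_neg hx (sub_neg.2 h)) (by positivity)

theorem hillMap_eq_self (hk : k ≠ 0) (hb : 0 < b) (hx : 0 ≤ x) (h : x ^ (k - 1) * (1 - x) = b) :
    hillMap k b x = x := by
  rw [← sub_eq_zero, hillMap_sub_self hk (by positivity), h, sub_self, mul_zero, zero_div]

theorem strictMonoOn_hillMap (hk : k ≠ 0) (hb : 0 < b) : StrictMonoOn (hillMap k b) (Ici 0) := by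
  intro x (hx : 0 ≤ x) y (hy : 0 ≤ y) hxy
  have hpow : x ^ k < y ^ k := pow_lt_pow_left₀ hxy hx hk
  rw [hillMap, hillMap, div_lt_div_iff₀ (by positivity) (by positivity)]
  nlinarith

theorem hasDerivAt_hillMap (hx : x ^ k + b ≠ 0) :
    HasDerivAt (hillMap k b) (k * b * x ^ (k - 1) / (x ^ k + b) ^ 2) x := by
  have hpow := hasDerivAt_pow k x
  exact (hpow.div (hpow.add_const b) hx).congr_deriv (by ring)

theorem continuousOn_hillMap (hb : 0 < b) : ContinuousOn (hillMap k b) (Ici 0) :=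
  fun x (hx : 0 ≤ x) => (hasDerivAt_hillMap (by positivity)).continuousAt.continuousWithinAt

theorem deriv_hillMap_of_pow_mul_one_sub_eq (hk : k ≠ 0) (hx : 0 < x)
    (h : x ^ (k - 1) * (1 - x) = b) : deriv (hillMap k b) x = k * (1 - x) := by
  have hden : x ^ k + b = x ^ (k - 1) := by rw [← h, ← pow_sub_one_mul hk]; ring
  rw [(hasDerivAt_hillMap (hden ▸ (pow_pos hx _).ne')).deriv, hden, ← h]
  field_simp

theorem tendsto_iterate_hillMap {l u x : ℝ} (hk : k ≠ 0) (hb : 0 < b) (hl : 0 ≤ l)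
    (hlb : l ^ (k - 1) * (1 - l) = b) (hub : u ^ (k - 1) * (1 - u) = b) (hu : ((k : ℝ) - 1) / k ≤ u)
    (hlx : l < x) (hne : x ≠ u) :
    Tendsto (fun n => (hillMap k b)^[n] x) atTop (𝓝 u) ∧ ∀ n, (hillMap k b)^[n] x ≠ u := by
  have hpeak : ((k - 1 : ℕ) : ℝ) / ((k - 1 : ℕ) + 1) = ((k : ℝ) - 1) / k := by
    rw [Nat.cast_pred (Nat.pos_of_ne_zero hk), sub_add_cancel]
  have hu0 : 0 ≤ u := le_trans (hpeak ▸ by positivity) hu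
  have hfix := hillMap_eq_self hk hb hu0 hub
  rcases hne.lt_or_gt with hxu | hux
  · have hx0 : 0 < x := hl.trans_lt hlx
    refine (tendsto_iterate_of_lt_map hxu hfix ?_ ?_ ?_).imp_right fun hlt n => (hlt n).ne
    · exact (strictMonoOn_hillMap hk hb).mono fun y hy => hx0.le.trans hy.1
    · exact (continuousOn_hillMap hb).mono fun y hy => hx0.le.trans hy.1
    · exact fun y hy => lt_hillMap hk hb (hx0.trans_le hy.1)
        (lt_pow_mul_one_sub_of_mem_Ioo hl hlb hub ⟨hlx.trans_le hy.1, hy.2⟩)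
  · refine (tendsto_iterate_of_map_lt hux hfix ?_ ?_ ?_).imp_right fun hgt n => (hgt n).ne'
    · exact (strictMonoOn_hillMap hk hb).mono fun y hy => hu0.trans hy.1
    · exact (continuousOn_hillMap hb).mono fun y hy => hu0.trans hy.1
    · refine fun y hy => hillMap_lt hk hb (hu0.trans_lt hy.1) (hub ▸ ?_)
      refine strictAntiOn_pow_mul_one_sub _ ?_ ?_ hy.1 <;> rw [mem_Ici, hpeak]
      exacts [hu, hu.trans hy.1.le]

end HillMap

theorem h_b_qlinear_general (N : ℕ) (hN : 1 ≤ N) (b : ℝ) (hb0 : 0 < b)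
    (xl xu : ℝ)
    (hxl : xl ∈ Set.Ioo (0:ℝ) ((2 * (N:ℝ) - 1) / (2 * N)))
    (hxl_eq : xl ^ (2 * N - 1) * (1 - xl) = b)
    (hxu : xu ∈ Set.Ioo ((2 * (N:ℝ) - 1) / (2 * N)) 1)
    (hxu_eq : xu ^ (2 * N - 1) * (1 - xu) = b) :
    HasDerivAt (fun x : ℝ => x ^ (2 * N) / (x ^ (2 * N) + b))
      (2 * (N:ℝ) * b * xu ^ (2 * N - 1) / (xu ^ (2 * N) + b) ^ 2) xu ∧
    2 * (N:ℝ) * b * xu ^ (2 * N - 1) / (xu ^ (2 * N) + b) ^ 2 < 1 ∧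
    (∀ x₀ ∈ Set.Ioc xl 1, x₀ ≠ xu →
      Filter.Tendsto
        (fun n : ℕ =>
          |2 * (1 - (fun y : ℝ => y ^ (2 * N) / (y ^ (2 * N) + b))^[n + 1] x₀)
              - 2 * (1 - xu)| /
          |2 * (1 - (fun y : ℝ => y ^ (2 * N) / (y ^ (2 * N) + b))^[n] x₀)
              - 2 * (1 - xu)|)
        Filter.atTop
        (nhds (2 * (N:ℝ) * b * xu ^ (2 * N - 1) / (xu ^ (2 * N) + b) ^ 2))) := by
  rw [show (fun y : ℝ => y ^ (2 * N) / (y ^ (2 * N) + b)) = hillMap (2 * N) b from rfl]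
  have hk : 2 * N ≠ 0 := by omega
  have hxu0 : 0 < xu := hxl.1.trans (hxl.2.trans hxu.1)
  have hD : HasDerivAt (hillMap (2 * N) b)
      (2 * (N : ℝ) * b * xu ^ (2 * N - 1) / (xu ^ (2 * N) + b) ^ 2) xu := by
    simpa using hasDerivAt_hillMap (k := 2 * N) (x := xu) (b := b) (by positivity)
  have hrate : 2 * (N : ℝ) * b * xu ^ (2 * N - 1) / (xu ^ (2 * N) + b) ^ 2 = 2 * N * (1 - xu) := by
    simpa using hD.deriv.symm.trans (deriv_hillMap_of_pow_mul_one_sub_eq hk hxu0 hxu_eq)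
  refine ⟨hD, ?_, fun x₀ hx₀ hne => ?_⟩
  · rw [hrate]
    have hpeak := hxu.1
    rw [div_lt_iff₀ (by positivity)] at hpeak
    linarith
  obtain ⟨hconv, hne⟩ := tendsto_iterate_hillMap hk hb0 hxl.1.le hxl_eq hxu_eq
    (by push_cast; exact hxu.1.le) hx₀.1 hne
  have hq := tendsto_norm_iterate_succ_sub_div hD (hillMap_eq_self hk hb0 hxu0.le hxu_eq) hconv hne
  rw [Real.norm_eq_abs, abs_of_nonneg (by positivity)] at hq
  have hscale (u : ℝ) : |2 * (1 - u) - 2 * (1 - xu)| = 2 * ‖u - xu‖ := by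
    rw [Real.norm_eq_abs, ← abs_two, ← abs_mul, ← abs_neg]
    ring_nf
  refine hq.congr fun n => ?_
  rw [hscale, hscale, mul_div_mul_left _ _ two_ne_zero]

theorem h_b_qlinear (N : ℕ) (hN : 1 ≤ N) (b : ℝ) (hb0 : 0 < b)
    (hb1 : b < (1 / (2 * N)) * ((2 * (N:ℝ) - 1) / (2 * N)) ^ (2 * N - 1))
    (xl xu : ℝ)
    (hxl : xl ∈ Set.Ioo (0:ℝ) ((2 * (N:ℝ) - 1) / (2 * N)))
    (hxl_eq : xl ^ (2 * N - 1) * (1 - xl) = b)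
    (hxu : xu ∈ Set.Ioo ((2 * (N:ℝ) - 1) / (2 * N)) 1)
    (hxu_eq : xu ^ (2 * N - 1) * (1 - xu) = b) :
    HasDerivAt (fun x : ℝ => x ^ (2 * N) / (x ^ (2 * N) + b))
      (2 * (N:ℝ) * b * xu ^ (2 * N - 1) / (xu ^ (2 * N) + b) ^ 2) xu ∧
    2 * (N:ℝ) * b * xu ^ (2 * N - 1) / (xu ^ (2 * N) + b) ^ 2 < 1 ∧
    (∀ x₀ ∈ Set.Ioc xl 1, x₀ ≠ xu →
      Filter.Tendsto
        (fun n : ℕ =>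
          |2 * (1 - (fun y : ℝ => y ^ (2 * N) / (y ^ (2 * N) + b))^[n + 1] x₀)
              - 2 * (1 - xu)| /
          |2 * (1 - (fun y : ℝ => y ^ (2 * N) / (y ^ (2 * N) + b))^[n] x₀)
              - 2 * (1 - xu)|)
        Filter.atTop
        (nhds (2 * (N:ℝ) * b * xu ^ (2 * N - 1) / (xu ^ (2 * N) + b) ^ 2))) :=
  h_b_qlinear_general N hN b hb0 xl xu hxl hxl_eq hxu hxu_eq
end
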